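/- Suppose a Fink–Mao region word w of length n ends with the suffix C, X, Y, C where {X, Y} = {L, R}. Then for every even d ≥ 2 there exists a Fink–Mao region word of length n + d whose reduced form (under the reductions of the Reduction Lemma) equals the reduced form of w; such a word is obtained by inserting an alternating L/R block of length d immediately before the final four-letter suffix of w. -/

import Mathlib

/-- A region of the tie diagram: left, right, or center. -/
inductive Region : Type
  | L | R | C
deriving DecidableEq

open Region

/-- A Fink–Mao region word: a list of letters from {L, R, C} with consecutive
letters distinct, first letter `L`, ending with the suffix `L,R,C` or `R,L,C`. -/
def FMWord (w : List Region) : Prop :=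
  w.Chain' (· ≠ ·) ∧ w.head? = some L ∧
    ([L, R, C] <:+ w ∨ [R, L, C] <:+ w)

/-- Swap `L` and `R` (fixing `C`). -/
def other : Region → Region
  | L => R
  | R => L
  | C => C

/-- `altWord s n` is the alternating word of length `n` starting with letter `s`. -/
def altWord : Region → ℕ → List Region
  | _, 0 => []
  | s, n + 1 => s :: altWord (other s) n

/-- One step of the reductions 0–IV of the Reduction Lemma, on region words. -/
inductive Red : List Region → List Region → Prop
  | red0 : Red [L, R, C] []
  | red1 (w : List Region) (X Y t : Region) :
      ((X = L ∧ Y = R) ∨ (X = R ∧ Y = L)) → (t = L ∨ t = R) →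
      Red (w ++ [X, Y, X, C]) (w ++ [X, C, t])
  | red2 (w : List Region) (X Y : Region) :
      ((X = L ∧ Y = R) ∨ (X = R ∧ Y = L)) → Red (w ++ [C, X, Y, C]) w
  | red3 (s : Region) (n : ℕ) : (s = L ∨ s = R) → Red (altWord s (n + 1)) []
  | red4 (w : List Region) (s : Region) (n : ℕ) :
      (s = L ∨ s = R) → Red (w ++ [C] ++ altWord s (n + 2)) (w ++ [C, s])

/-!
Since `C` follows it, the last letter `a` of `v` is `L` or `R`, so `v` ends in a maximal
alternating block, preceded either by nothing or by a `C`. Inserting `d` letters that continue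
the alternation (starting with `other a`) just lengthens this block. Reduction II strips the
suffix `C,X,Y,C` from both words, and then reduction III (no `C` before the block) or IV
(a `C` before it) collapses the block to a word that does not depend on its length.
-/

lemma other_other (s : Region) : other (other s) = s := by
  cases s <;> rfl

lemma other_ne_C {s : Region} (hs : s ≠ C) : other s ≠ C := by
  cases s <;> simp_all [other]

lemma other_ne_self {s : Region} (hs : s ≠ C) : other s ≠ s := by
  cases s <;> simp_all [other]

lemma eq_other_of_ne {a b : Region} (ha : a ≠ C) (hb : b ≠ C) (hab : a ≠ b) :
    a = other b := by
  cases a <;> cases b <;> simp_all [other]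

lemma ne_C_iff {s : Region} : s ≠ C ↔ s = L ∨ s = R := by
  cases s <;> simp

lemma altWord_length (s : Region) (n : ℕ) : (altWord s n).length = n := by
  induction n generalizing s with
  | zero => rfl
  | succ n ih => simp [altWord, ih]

lemma C_not_mem_altWord {s : Region} (hs : s ≠ C) (n : ℕ) : C ∉ altWord s n := by
  induction n generalizing s with
  | zero => simp [altWord]
  | succ n ih => simpa [altWord, Ne.symm hs] using ih (other_ne_C hs)

lemma isChain_altWord {s : Region} (hs : s ≠ C) (n : ℕ) :
    (altWord s n).IsChain (· ≠ ·) := by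
  induction n generalizing s with
  | zero => simp [altWord]
  | succ n ih =>
    refine List.isChain_cons.mpr ⟨?_, ih (other_ne_C hs)⟩
    cases n with
    | zero => simp [altWord]
    | succ n => simpa [altWord] using (other_ne_self hs).symm

lemma isChain_append_altWord_append {u e : List Region} {a : Region}
    (h : (u ++ [a] ++ e).IsChain (· ≠ ·)) (ha : a ≠ C) (he : e.head? = some C) (d : ℕ) :
    (u ++ [a] ++ altWord (other a) d ++ e).IsChain (· ≠ ·) := by
  obtain ⟨hua, he_chain, -⟩ := List.isChain_append.mp h
  obtain ⟨hu, -, hu_a⟩ := List.isChain_append.mp hua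
  rw [show u ++ [a] ++ altWord (other a) d = u ++ altWord a (d + 1) by simp [altWord]]
  refine (hu.append (isChain_altWord ha (d + 1)) hu_a).append he_chain ?_
  rintro x hx y hy rfl
  rw [List.getLast?_append_of_ne_nil _ (by simp [altWord])] at hx
  simp only [he, Option.mem_def, Option.some.injEq] at hy
  exact C_not_mem_altWord ha _ (hy ▸ List.mem_of_getLast? hx)

lemma FMWord.insert {v b e : List Region} (h : FMWord (v ++ e)) (hv : v ≠ [])
    (he : 3 ≤ e.length) (hchain : (v ++ b ++ e).IsChain (· ≠ ·)) : FMWord (v ++ b ++ e) := by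
  obtain ⟨-, hhead, hsuf⟩ := h
  refine ⟨hchain, ?_, ?_⟩
  · obtain ⟨x, xs, rfl⟩ := List.exists_cons_of_ne_nil hv
    simpa using hhead
  · have key (w : List Region) (hw : w.length = 3) (hwe : w <:+ v ++ e) : w <:+ v ++ b ++ e :=
      (List.suffix_of_suffix_length_le hwe (List.suffix_append v e) (by omega)).trans
        (List.suffix_append _ e)
    exact hsuf.imp (key _ rfl) (key _ rfl)

lemma exists_append_altWord_of_isChain {u : List Region} {a : Region}
    (h : (u ++ [a]).IsChain (· ≠ ·)) (ha : a ≠ C) :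
    ∃ p t k, t ≠ C ∧ (p = [] ∨ ∃ q, p = q ++ [C]) ∧
      ∀ d, u ++ [a] ++ altWord (other a) d = p ++ altWord t (k + 1 + d) := by
  induction u using List.reverseRecOn generalizing a with
  | nil => exact ⟨[], a, 0, ha, .inl rfl, fun d => by simp [altWord, Nat.add_comm]⟩
  | append_singleton u c ih =>
    obtain ⟨huc, -, hjunction⟩ := List.isChain_append.mp h
    have hca : c ≠ a := hjunction c (by simp) a rfl
    by_cases hc : c = C
    · subst hc
      exact ⟨u ++ [C], a, 0, ha, .inr ⟨u, rfl⟩, fun d => by simp [altWord, Nat.add_comm]⟩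
    obtain ⟨p, t, k, ht, hp, hext⟩ := ih huc hc
    refine ⟨p, t, k + 1, ht, hp, fun d => ?_⟩
    have hshift :
        u ++ [c] ++ [a] ++ altWord (other a) d = u ++ [c] ++ altWord (other c) (d + 1) := by
      rw [eq_other_of_ne ha hc hca.symm]
      simp [altWord, other_other]
    rw [hshift, hext, show k + 1 + (d + 1) = k + 1 + 1 + d by omega]

lemma exists_reflTransGen_red_append_altWord {p : List Region} {t : Region} (ht : t ≠ C)
    (hp : p = [] ∨ ∃ q, p = q ++ [C]) :
    ∃ z, ∀ j, Relation.ReflTransGen Red (p ++ altWord t (j + 1)) z := by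
  rcases hp with rfl | ⟨q, rfl⟩
  · exact ⟨[], fun j => .single (by simpa using Red.red3 t j (ne_C_iff.mp ht))⟩
  · refine ⟨q ++ [C, t], fun j => ?_⟩
    cases j with
    | zero => simpa [altWord] using Relation.ReflTransGen.refl
    | succ j => exact .single (Red.red4 q t j (ne_C_iff.mp ht))

/-- If a Fink–Mao region word of length `n` ends with the suffix `C,X,Y,C` where
`{X,Y} = {L,R}`, then for every even `d ≥ 2` there is a Fink–Mao region word of
length `n + d`, obtained by inserting an alternating L/R block of length `d` just
before the final four-letter suffix, whose reduced form agrees with that of the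
original word (both words reduce to a common word). -/
theorem lengthen_tie_sequence (v : List Region) (X Y : Region) (n : ℕ)
    (hw : FMWord (v ++ [C, X, Y, C])) (hn : (v ++ [C, X, Y, C]).length = n)
    (hXY : (X = L ∧ Y = R) ∨ (X = R ∧ Y = L)) :
    ∀ d : ℕ, 2 ≤ d → Even d →
      ∃ s : Region, (s = L ∨ s = R) ∧
        FMWord (v ++ altWord s d ++ [C, X, Y, C]) ∧
        (v ++ altWord s d ++ [C, X, Y, C]).length = n + d ∧
        ∃ z : List Region,
          Relation.ReflTransGen Red (v ++ [C, X, Y, C]) z ∧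
          Relation.ReflTransGen Red (v ++ altWord s d ++ [C, X, Y, C]) z := by
  intro d _ _
  have hv : v ≠ [] := by rintro rfl; simp [FMWord] at hw
  obtain ⟨u, a, rfl⟩ := (List.eq_nil_or_concat' v).resolve_left hv
  have hchain := List.isChain_append.mp hw.1
  have ha : a ≠ C := hchain.2.2 a (by simp) C rfl
  obtain ⟨p, t, k, ht, hp, hext⟩ := exists_append_altWord_of_isChain hchain.1 ha
  obtain ⟨z, hz⟩ := exists_reflTransGen_red_append_altWord ht hp
  refine ⟨other a, ne_C_iff.mp (other_ne_C ha),
    hw.insert hv (by simp) (isChain_append_altWord_append hw.1 ha rfl d),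
    by simp [altWord_length, ← hn]; omega, z, ?_, ?_⟩
  · refine .head (Red.red2 _ X Y hXY) ?_
    have hblock : u ++ [a] = p ++ altWord t (k + 1) := by simpa [altWord] using hext 0
    exact hblock ▸ hz k
  · refine .head (Red.red2 _ X Y hXY) ?_
    rw [hext, show k + 1 + d = k + d + 1 by omega]
    exact hz _
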